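/- Let T be a diagram with labeling L. For every column c, the labeling L is flagged if and only if the rectified labeling R_c^*(L) of R_c^*(T) is flagged. -/

import Mathlib

/-!
Definitions for Kohnert diagrams, Kohnert crystals, rectification, Kohnert labelings,
Demazure characters and Kohnert polynomials, following Assaf,
"Demazure crystals for Kohnert polynomials".
-/

namespace Kohnert

/-- A cell `(c, r)` records a column index `c` and a row index `r`. -/
abbrev Cell : Type := ℕ × ℕ

/-- A diagram is a finite set of cells whose coordinates are at least `1`. -/
def IsDiagram (D : Finset Cell) : Prop := ∀ x ∈ D, 1 ≤ x.1 ∧ 1 ≤ x.2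

/-- A diagram is southwest if whenever `(c₁,r₂)` and `(c₂,r₁)` are cells with
`r₁ < r₂` and `c₁ < c₂`, then `(c₁,r₁)` is also a cell. -/
def Southwest (D : Finset Cell) : Prop :=
  ∀ c₁ c₂ r₁ r₂, (c₁, r₂) ∈ D → (c₂, r₁) ∈ D → r₁ < r₂ → c₁ < c₂ → (c₁, r₁) ∈ D

/-- The weight of a diagram: its `r`-th entry is the number of cells in row `r`. -/
noncomputable def wt (T : Finset Cell) : ℕ →₀ ℕ := ∑ x ∈ T, Finsupp.single x.2 1

/-- A single Kohnert move: the rightmost cell `(c,r)` of some row moves down within its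
column to the highest empty position `(c,r')` below it (jumping over occupied positions
as needed), provided such a position with `r' ≥ 1` exists. -/
def KohnertMove (T S : Finset Cell) : Prop :=
  ∃ c r r', (c, r) ∈ T ∧ (∀ c', (c', r) ∈ T → c' ≤ c) ∧
    1 ≤ r' ∧ r' < r ∧ (c, r') ∉ T ∧ (∀ s, r' < s → s < r → (c, s) ∈ T) ∧
    S = insert (c, r') (T.erase (c, r))

/-- `KD D` is the set of diagrams obtainable from `D` by a (possibly empty) sequence of
Kohnert moves. -/
def KD (D : Finset Cell) : Set (Finset Cell) := {T | Relation.ReflTransGen KohnertMove D T}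

/-! ### Row pairing and the crystal raising and lowering operators -/

/-- Columns of the cells of row `i+1` having no cell of row `i` below them. -/
def freeUpCols (T : Finset Cell) (i : ℕ) : Finset ℕ :=
  (T.filter fun x => x.2 = i + 1 ∧ (x.1, i) ∉ T).image Prod.fst

/-- Columns of the cells of row `i` having no cell of row `i+1` above them. -/
def freeDownCols (T : Finset Cell) (i : ℕ) : Finset ℕ :=
  (T.filter fun x => x.2 = i ∧ (x.1, i + 1) ∉ T).image Prod.fst

/-- The cell `(c, i+1)` of `T` is not `i`-paired: cells of rows `i` and `i+1` in a common
column are `i`-paired with each other, and the remaining cells are matched by the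
iterative rule pairing a cell of row `i` with a cell of row `i+1` strictly to its right
whenever all cells of the two rows strictly between them are already `i`-paired.  This is
the standard bracketing characterization of the resulting matching. -/
def UnpairedUp (T : Finset Cell) (i c : ℕ) : Prop :=
  (c, i + 1) ∈ T ∧ (c, i) ∉ T ∧
    ((freeDownCols T i).filter (fun d => d < c)).card <
      ((freeUpCols T i).filter (fun d => d ≤ c)).card

/-- The cell `(c, i)` of `T` is not `i`-paired. -/
def UnpairedDown (T : Finset Cell) (i c : ℕ) : Prop :=
  (c, i) ∈ T ∧ (c, i + 1) ∉ T ∧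
    ((freeUpCols T i).filter (fun d => c < d)).card <
      ((freeDownCols T i).filter (fun d => c ≤ d)).card

/-- A cell of `T` lying in row `i` or `i+1` is `i`-paired. -/
def RowPaired (T : Finset Cell) (i : ℕ) (x : Cell) : Prop :=
  x ∈ T ∧ ((x.2 = i + 1 ∧ ¬ UnpairedUp T i x.1) ∨ (x.2 = i ∧ ¬ UnpairedDown T i x.1))

open Classical in
/-- The raising operator `e_i`: move the rightmost non-`i`-paired cell of row `i+1`
down to row `i`, staying within its column; if every cell of row `i+1` is `i`-paired,
the result is `none` (that is, `e_i(T) = 0`). -/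
noncomputable def raise (i : ℕ) (T : Finset Cell) : Option (Finset Cell) :=
  if ∃ c, UnpairedUp T i c then
    some (insert (sSup {c | UnpairedUp T i c}, i) (T.erase (sSup {c | UnpairedUp T i c}, i + 1)))
  else none

open Classical in
/-- The lowering operator `f_i` relative to `D`: move the leftmost non-`i`-paired cell of
row `i` up to row `i+1`, staying within its column, provided the result lies in `KD D`;
otherwise the result is `none` (that is, `f_i(T) = 0`). -/
noncomputable def lower (D : Finset Cell) (i : ℕ) (T : Finset Cell) : Option (Finset Cell) :=
  if ∃ c, UnpairedDown T i c then
    if insert (sInf {c | UnpairedDown T i c}, i + 1)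
        (T.erase (sInf {c | UnpairedDown T i c}, i)) ∈ KD D then
      some (insert (sInf {c | UnpairedDown T i c}, i + 1)
        (T.erase (sInf {c | UnpairedDown T i c}, i)))
    else none
  else none

/-- One raising-operator step. -/
def RaiseStep (T S : Finset Cell) : Prop := ∃ i, 1 ≤ i ∧ raise i T = some S

/-- A highest weight diagram: every raising operator vanishes on it. -/
def HighestWeight (U : Finset Cell) : Prop := ∀ r, 1 ≤ r → raise r U = none

/-- The equivalence relation generated by `T ∼ e_i(T)` whenever `e_i(T) ≠ 0`. -/
def CrystalEquiv : Finset Cell → Finset Cell → Prop := Relation.EqvGen RaiseStep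

/-- `K` is a connected component of the Kohnert crystal on `KD D`. -/
def IsComponent (D : Finset Cell) (K : Set (Finset Cell)) : Prop :=
  ∃ T₀ ∈ KD D, K = {S | S ∈ KD D ∧ CrystalEquiv S T₀}

/-! ### Column pairing and rectification -/

/-- Rows of the cells of column `c` having no cell of column `c+1` in their row. -/
def freeLeftRows (T : Finset Cell) (c : ℕ) : Finset ℕ :=
  (T.filter fun x => x.1 = c ∧ (c + 1, x.2) ∉ T).image Prod.snd

/-- Rows of the cells of column `c+1` having no cell of column `c` in their row. -/
def freeRightRows (T : Finset Cell) (c : ℕ) : Finset ℕ :=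
  (T.filter fun x => x.1 = c + 1 ∧ (c, x.2) ∉ T).image Prod.snd

/-- The cell `(c+1, r)` of `T` is not column `c`-paired: cells of columns `c` and `c+1`
in a common row are paired with each other, and the remaining cells are matched by the
iterative rule pairing a cell of column `c+1` with a cell of column `c` strictly above it
whenever all cells of the two columns strictly between them are already paired. -/
def ColUnpaired (T : Finset Cell) (c r : ℕ) : Prop :=
  (c + 1, r) ∈ T ∧ (c, r) ∉ T ∧
    ((freeLeftRows T c).filter (fun s => r < s)).card <
      ((freeRightRows T c).filter (fun s => r ≤ s)).card

open Classical in
/-- The rectification operator `R_c`: move the lowest non-column-`c`-paired cell of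
column `c+1` left to column `c`, staying within its row; if every cell of column `c+1`
is column `c`-paired, do nothing. -/
noncomputable def rectify (c : ℕ) (T : Finset Cell) : Finset Cell :=
  if ∃ r, ColUnpaired T c r then
    insert (c, sInf {r | ColUnpaired T c r}) (T.erase (c + 1, sInf {r | ColUnpaired T c r}))
  else T

/-- `R_c^*`: apply `R_c` until it acts trivially (at most `T.card` nontrivial
applications are possible, since each moves a distinct cell of column `c+1`). -/
noncomputable def rectifyStar (c : ℕ) (T : Finset Cell) : Finset Cell := (rectify c)^[T.card] T

/-- A diagram is rectified: for all `c, r ≥ 1`,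
`#{s ≥ r : (c,s) ∈ T} ≥ #{s ≥ r : (c+1,s) ∈ T}`. -/
def Rectified (T : Finset Cell) : Prop :=
  ∀ c r, 1 ≤ c → 1 ≤ r →
    (T.filter fun x => x.1 = c + 1 ∧ r ≤ x.2).card ≤ (T.filter fun x => x.1 = c ∧ r ≤ x.2).card

/-- One rectification-operator step. -/
def RectStep (T S : Finset Cell) : Prop := ∃ c, 1 ≤ c ∧ S = rectify c T

open Classical in
/-- The rectification of a diagram: the (unique) rectified diagram obtained by applying
rectification operators, in any order, until all act trivially. -/
noncomputable def rect (T : Finset Cell) : Finset Cell :=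
  if h : ∃ S, Relation.ReflTransGen RectStep T S ∧ Rectified S then h.choose else T

/-- `T` is the composition diagram `{(c,r) : 1 ≤ c ≤ a r}` of the weak composition `a`. -/
def IsCompDiagramOf (T : Finset Cell) (a : ℕ → ℕ) : Prop :=
  ∀ c r, (c, r) ∈ T ↔ 1 ≤ c ∧ 1 ≤ r ∧ c ≤ a r

/-- `T` is a composition diagram. -/
def IsCompositionDiagram (T : Finset Cell) : Prop := ∃ a : ℕ → ℕ, IsCompDiagramOf T a

/-! ### Labelings of diagrams -/

/-- A labeling assigns an integer label to each cell of a diagram. -/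
abbrev Labeling := Cell → ℕ

/-- A labeling is flagged if every cell in row `r` has label at least `r`. -/
def Flagged (T : Finset Cell) (L : Labeling) : Prop := ∀ x ∈ T, x.2 ≤ L x

/-- The diagram `𝔻(L)` recording the labels: a cell `(c, r)` whenever column `c` of `T`
contains a cell labeled `r`. -/
def labelDiagram (T : Finset Cell) (L : Labeling) : Finset Cell := T.image fun x => (x.1, L x)

/-- The set of rows of the cells of column `c`. -/
def colRows (T : Finset Cell) (c : ℕ) : Finset ℕ := (T.filter fun x => x.1 = c).image Prod.snd

/-- The element of `s` maximizing `f` (taking the largest such element). -/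
noncomputable def argmaxIn (f : ℕ → ℕ) (s : Finset ℕ) : Option ℕ :=
  if h : s.Nonempty then
    some ((s.filter fun a => f a = s.sup' h f).max' (by
      obtain ⟨b, hb, he⟩ := Finset.exists_mem_eq_sup' h f
      exact ⟨b, Finset.mem_filter.2 ⟨hb, he.symm⟩⟩))
  else none

/-- Greedy label `c`-pairing: process the rows of column `c+1` in the given order; the
cell in row `r` is paired with the still-available cell of column `c` lying weakly above
it whose label is largest among those with label at most `L (c+1, r)`, if one exists. -/
noncomputable def labelPairList (L : Labeling) (c : ℕ) :
    List ℕ → Finset ℕ → List (ℕ × Option ℕ)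
  | [], _ => []
  | r :: rs, avail =>
    match argmaxIn (fun s => L (c, s)) (avail.filter fun s => r ≤ s ∧ L (c, s) ≤ L (c + 1, r)) with
    | none => (r, none) :: labelPairList L c rs avail
    | some s => (r, some s) :: labelPairList L c rs (avail.erase s)

/-- The label `c`-pairing of `T` with respect to `L`, processing the cells of column
`c+1` from top to bottom. -/
noncomputable def labelPairing (L : Labeling) (T : Finset Cell) (c : ℕ) : List (ℕ × Option ℕ) :=
  labelPairList L c (((colRows T (c + 1)).sort (· ≤ ·)).reverse) (colRows T c)

/-- The row of the cell of column `c` label `c`-paired with the cell `(c+1, r)`, if any. -/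
noncomputable def labelPartner (L : Labeling) (T : Finset Cell) (c r : ℕ) : Option ℕ :=
  ((labelPairing L T c).lookup r).join

open Classical in
/-- The swapping pass in the construction of the rectified labeling: for each label
`c`-unpaired cell `x` of column `c+1` (processed from highest to lowest), if there are
label `c`-paired cells `y` (in column `c`) and `z` (in column `c+1`) with `z` above `x`
and `L(y) ≤ L'(x) < L'(z)`, swap the labels of `x` and such `z` with `L'(z)` maximal. -/
noncomputable def swapPass (L0 : Labeling) (T : Finset Cell) (c : ℕ) :
    List ℕ → Labeling → Labeling
  | [], L' => L'
  | r :: rs, L' =>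
    match argmaxIn (fun s => L' (c + 1, s)) ((colRows T (c + 1)).filter fun s =>
        r < s ∧ ∃ t ∈ colRows T c, labelPartner L0 T c s = some t ∧
          L0 (c, t) ≤ L' (c + 1, r) ∧ L' (c + 1, r) < L' (c + 1, s)) with
    | none => swapPass L0 T c rs L'
    | some z => swapPass L0 T c rs
        (Function.update (Function.update L' (c + 1, r) (L' (c + 1, z))) (c + 1, z) (L' (c + 1, r)))

/-- The label `c`-unpaired rows of column `c+1`, from highest to lowest. -/
noncomputable def unpairedDesc (L : Labeling) (T : Finset Cell) (c : ℕ) : List ℕ :=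
  (((colRows T (c + 1)).filter fun r => labelPartner L T c r = none).sort (· ≤ ·)).reverse

open Classical in
/-- The relabeling `L'` of `T` at column `c`: perform the swapping pass on the label
`c`-unpaired cells of column `c+1`, then give every label `c`-paired cell of column
`c+1` the label of its partner in column `c`. -/
noncomputable def relabel (L : Labeling) (T : Finset Cell) (c : ℕ) : Labeling :=
  fun x =>
    if x.1 = c + 1 ∧ x ∈ T then
      match labelPartner L T c x.2 with
      | some t => L (c, t)
      | none => swapPass L T c (unpairedDesc L T c) L x
    else L x

open Classical in
/-- The rectified labeling `R_c^*(L)` of `R_c^*(T)`: cells moved from column `c+1` to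
column `c` under rectification carry their relabeled labels with them. -/
noncomputable def rectifyStarLabel (L : Labeling) (T : Finset Cell) (c : ℕ) : Labeling :=
  fun x =>
    if x.1 = c ∧ x ∉ T ∧ (c + 1, x.2) ∈ T ∧ x ∈ rectifyStar c T then
      relabel L T c (c + 1, x.2)
    else relabel L T c x

/-- Labeled rectification at column `c`. -/
noncomputable def rectStarLab (c : ℕ) (p : Finset Cell × Labeling) : Finset Cell × Labeling :=
  (rectifyStar c p.1, rectifyStarLabel p.2 p.1 c)

/-- Apply labeled rectification at each of the given columns in order. -/
noncomputable def sweepLab (cols : List ℕ) (p : Finset Cell × Labeling) :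
    Finset Cell × Labeling :=
  cols.foldl (fun q c => rectStarLab c q) p

/-- The fully rectified labeled diagram, rectifying columns from the rightmost down to
column `lo` and iterating until stable. -/
noncomputable def rectLabFrom (lo : ℕ) (p : Finset Cell × Labeling) : Finset Cell × Labeling :=
  (fun q => sweepLab ((List.range' lo (p.1.sup Prod.fst + 1 - lo)).reverse) q)^[∑ x ∈ p.1, x.1] p

/-- The fully rectified labeled diagram `(rect T, rect L)`. -/
noncomputable def rectLab (p : Finset Cell × Labeling) : Finset Cell × Labeling := rectLabFrom 1 p

open Classical in
/-- Greedy assignment of the given labels (in increasing order) to the available rows of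
column `c`: each label goes to the lowest available row lying weakly above the cell with
that label in column `c+1` of the rectified right part `rp`, if such a cell exists; the
result is `none` when no such assignment is possible. -/
noncomputable def greedyAssign (c : ℕ) (rp : Finset Cell × Labeling) :
    List ℕ → Finset ℕ → Option (List (ℕ × ℕ))
  | [], _ => some []
  | lab :: labs, avail =>
    if h : (avail.filter fun row =>
        ∀ s ∈ colRows rp.1 (c + 1), rp.2 (c + 1, s) = lab → s ≤ row).Nonempty then
      (greedyAssign c rp labs (avail.erase ((avail.filter fun row =>
          ∀ s ∈ colRows rp.1 (c + 1), rp.2 (c + 1, s) = lab → s ≤ row).min' h))).map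
        (fun l => (lab, (avail.filter fun row =>
          ∀ s ∈ colRows rp.1 (c + 1), rp.2 (c + 1, s) = lab → s ≤ row).min' h) :: l)
    else none

open Classical in
/-- Label the rightmost `k` columns `m, m-1, …, m-k+1` of `T` with respect to `D`:
having labeled the columns strictly right of column `c`, rectify that part of `T`
together with its labels (with column `c+1` as the leftmost available column) and then
greedily assign the labels `{r : (c,r) ∈ D}` to the cells of column `c`. -/
noncomputable def labelColsAux (D T : Finset Cell) (m : ℕ) : ℕ → Option Labeling
  | 0 => some fun _ => 0
  | k + 1 =>
    match labelColsAux D T m k with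
    | none => none
    | some L =>
      match greedyAssign (m - k) (rectLabFrom (m - k + 1) (T.filter fun x => m - k < x.1, L))
          ((colRows D (m - k)).sort (· ≤ ·)) (colRows T (m - k)) with
      | none => none
      | some asg =>
        some fun x =>
          if x.1 = m - k then ((asg.find? fun p => p.2 == x.2).map Prod.fst).getD (L x)
          else L x

/-- The Kohnert labeling `L_D` of `T` with respect to `D`, or `none` when it is not
well defined. -/
noncomputable def kohnertLabel (D T : Finset Cell) : Option Labeling :=
  labelColsAux D T (T.sup Prod.fst) (T.sup Prod.fst)

/-- `(T, L)` is a Kohnert tableau of content `a`: (i) for each `i ≥ 1` there is exactly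
one cell labeled `i` in each of columns `1, …, a i` and in no other column; (ii) every
cell in row `r` has label at least `r`; (iii) cells with a common label occupy weakly
descending rows from left to right; (iv) if labels `i < j` occur in one column with `i`
above `j`, there is a cell labeled `i` in the next column strictly above the cell
labeled `j`. -/
def IsKohnertTableau (T : Finset Cell) (L : Labeling) (a : ℕ → ℕ) : Prop :=
  (∀ x ∈ T, 1 ≤ L x) ∧
  (∀ i c, 1 ≤ i → 1 ≤ c → ((∃ x ∈ T, x.1 = c ∧ L x = i) ↔ c ≤ a i)) ∧
  (∀ x ∈ T, ∀ y ∈ T, x.1 = y.1 → L x = L y → x = y) ∧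
  (∀ x ∈ T, x.2 ≤ L x) ∧
  (∀ x ∈ T, ∀ y ∈ T, L x = L y → x.1 < y.1 → y.2 ≤ x.2) ∧
  (∀ x ∈ T, ∀ y ∈ T, x.1 = y.1 → L x < L y → y.2 < x.2 →
    ∃ z ∈ T, z.1 = x.1 + 1 ∧ L z = L x ∧ y.2 < z.2)

/-- `Y ∈ KD D` is Yamanouchi with respect to `D`: the rectification of the Kohnert
labeling `L_D(Y)` is the super-standard labeling of a composition diagram, i.e.
`rect Y` is a composition diagram and each of its cells in row `r` carries label `r`. -/
def Yamanouchi (D Y : Finset Cell) : Prop :=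
  Y ∈ KD D ∧ ∃ L, kohnertLabel D Y = some L ∧
    IsCompositionDiagram (rectLab (Y, L)).1 ∧
    ∀ x ∈ (rectLab (Y, L)).1, (rectLab (Y, L)).2 x = x.2

/-! ### Demazure characters and Kohnert polynomials -/

open MvPolynomial Classical in
/-- The isobaric divided difference operator
`π_i f = ∂_i (x_i f) = (x_i f − s_i · (x_i f)) / (x_i − x_{i+1})`, defined as the unique
polynomial `g` with `g * (x_i − x_{i+1}) = x_i f − s_i · (x_i f)`. -/
noncomputable def piOp (i : ℕ) (f : MvPolynomial ℕ ℤ) : MvPolynomial ℕ ℤ :=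
  if h : ∃ g, g * (X i - X (i + 1)) =
      X i * f - rename (Equiv.swap i (i + 1)) (X i * f) then h.choose else 0

/-- `IsDemazure a f` holds exactly when `f` is the Demazure character `κ_a`:
`κ_λ = x^λ` for `λ` a partition, and `κ_{s_i · a} = π_i κ_a` whenever `a i > a (i+1)`.
Iterating the latter from the sorted partition `λ` of `a` along a chain of strict
descents realizes `κ_a = π_{ρ_ℓ} ⋯ π_{ρ_1} (x_1^{λ_1} ⋯ x_n^{λ_n})` for precisely the
reduced words `(ρ_ℓ, …, ρ_1)` of the minimal-length permutation `w` with `w · λ = a`. -/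
inductive IsDemazure : (ℕ →₀ ℕ) → MvPolynomial ℕ ℤ → Prop
  | base (l : ℕ →₀ ℕ) (h0 : l 0 = 0) (hl : ∀ i, 1 ≤ i → l (i + 1) ≤ l i) :
      IsDemazure l (MvPolynomial.monomial l 1)
  | step (a : ℕ →₀ ℕ) (f : MvPolynomial ℕ ℤ) (i : ℕ) (hi : 1 ≤ i) (hlt : a (i + 1) < a i)
      (h : IsDemazure a f) :
      IsDemazure (a.equivMapDomain (Equiv.swap i (i + 1))) (piOp i f)

open Classical in
/-- `KD D` as a finite set (every Kohnert diagram of `D` lies in the box below `D`). -/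
noncomputable def KDfin (D : Finset Cell) : Finset (Finset Cell) :=
  ((D.biUnion fun x => {x.1} ×ˢ Finset.Icc 1 x.2).powerset).filter (· ∈ KD D)

/-- The Kohnert polynomial `K_D = Σ_{T ∈ KD(D)} x^{wt T}`. -/
noncomputable def kohnertPoly (D : Finset Cell) : MvPolynomial ℕ ℤ :=
  ∑ T ∈ KDfin D, MvPolynomial.monomial (wt T) 1

open Classical in
/-- The set of Yamanouchi diagrams for `D`, as a finite set. -/
noncomputable def YamFin (D : Finset Cell) : Finset (Finset Cell) :=
  (KDfin D).filter (Yamanouchi D)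

/-- The set of column indices of the cells of row `r` of `D`. -/
def rowSet (D : Finset Cell) (r : ℕ) : Finset ℕ := (D.filter fun x => x.2 = r).image Prod.fst

/-- A diagram is vexillary if its rows are totally ordered by inclusion. -/
def Vexillary (D : Finset Cell) : Prop :=
  ∀ r s, rowSet D r ⊆ rowSet D s ∨ rowSet D s ⊆ rowSet D r

/-- The diagram `s_c · D` obtained by exchanging the contents of columns `c` and `c+1`. -/
def swapCols (c : ℕ) (D : Finset Cell) : Finset Cell :=
  D.image fun x => if x.1 = c then (c + 1, x.2) else if x.1 = c + 1 then (c, x.2) else x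

/-!
Rectification only slides cells of column `c+1` left within their rows, carrying their
relabeled values, so `R_c^*(L)` is flagged exactly when the relabeling `L'` is flagged on `T`.
Since `L'` agrees with `L` off column `c+1`, it remains to compare `L` and `L'` there, knowing
column `c` is flagged. A label `c`-paired cell `(c+1, r)` gets the label of its partner
`(c, t)`, and `r ≤ t ≤ L(c, t) ≤ L(c+1, r)`. A swap exchanges the labels of cells `x` below `z`
where `z` is paired with `y` and `row z ≤ row y ≤ L(y) ≤ L'(x) < L'(z)`, so both labels are at least
both rows. Hence no cell of column `c+1` changes its flagged status.
-/

lemma mem_colRows {T : Finset Cell} {c r : ℕ} : r ∈ colRows T c ↔ (c, r) ∈ T := by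
  simp [colRows]

lemma argmaxIn_mem {f : ℕ → ℕ} {s : Finset ℕ} {a : ℕ} (h : argmaxIn f s = some a) : a ∈ s := by
  unfold argmaxIn at h
  split at h
  · rw [Option.some_inj] at h
    exact h ▸ (Finset.mem_filter.1 (Finset.max'_mem _ _)).1
  · exact absurd h nofun

lemma labelPairList_spec {L : Labeling} {c r s : ℕ} {rs : List ℕ} {avail : Finset ℕ}
    (h : (r, some s) ∈ labelPairList L c rs avail) :
    r ≤ s ∧ L (c, s) ≤ L (c + 1, r) ∧ s ∈ avail := by
  induction rs generalizing avail with
  | nil => simp [labelPairList] at h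
  | cons r₀ rs ih =>
    rw [labelPairList] at h
    split at h
    · simp only [List.mem_cons, Prod.mk.injEq, reduceCtorEq, and_false, false_or] at h
      exact ih h
    · next s₀ hs₀ =>
      rcases List.mem_cons.1 h with h | h
      · obtain ⟨rfl, rfl⟩ : r = r₀ ∧ s = s₀ := by simpa using h
        have := Finset.mem_filter.1 (argmaxIn_mem hs₀)
        exact ⟨this.2.1, this.2.2, this.1⟩
      · obtain ⟨h₁, h₂, h₃⟩ := ih h
        exact ⟨h₁, h₂, Finset.mem_of_mem_erase h₃⟩

lemma labelPartner_spec {L : Labeling} {T : Finset Cell} {c r t : ℕ}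
    (h : labelPartner L T c r = some t) :
    r ≤ t ∧ L (c, t) ≤ L (c + 1, r) ∧ (c, t) ∈ T := by
  obtain ⟨l₁, l₂, hl, -⟩ := List.lookup_eq_some_iff.1 (Option.join_eq_some_iff.1 h)
  have hmem : (r, some t) ∈ labelPairing L T c := by simp [hl]
  obtain ⟨h₁, h₂, h₃⟩ := labelPairList_spec hmem
  exact ⟨h₁, h₂, mem_colRows.1 h₃⟩

lemma le_comp_swap_iff {M : Labeling} {p q : Cell} (hpq : p.2 ≤ q.2) (hq : q.2 ≤ M p)
    (hM : M p ≤ M q) (x : Cell) : x.2 ≤ (M ∘ Equiv.swap p q) x ↔ x.2 ≤ M x := by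
  rcases eq_or_ne x p with rfl | hxp
  · simp only [Function.comp_apply, Equiv.swap_apply_left]
    omega
  rcases eq_or_ne x q with rfl | hxq
  · simp only [Function.comp_apply, Equiv.swap_apply_right]
    omega
  · rw [Function.comp_apply, Equiv.swap_apply_of_ne_of_ne hxp hxq]

section Relabel

variable {L : Labeling} {T : Finset Cell} {c : ℕ}

lemma le_swapPass_iff (hcol : ∀ t, (c, t) ∈ T → t ≤ L (c, t)) (rs : List ℕ) (M : Labeling)
    (x : Cell) : x.2 ≤ swapPass L T c rs M x ↔ x.2 ≤ M x := by
  induction rs generalizing M with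
  | nil => rw [swapPass]
  | cons r rs ih =>
    rw [swapPass]
    generalize hz : argmaxIn (fun s => M (c + 1, s)) _ = o
    rcases o with _ | z
    · exact ih M
    · dsimp only
      obtain ⟨-, hrz, t, -, hpart, hle, hlt⟩ := Finset.mem_filter.1 (argmaxIn_mem hz)
      obtain ⟨hzt, -, ht⟩ := labelPartner_spec hpart
      have hzM : z ≤ M (c + 1, r) := (hzt.trans (hcol t ht)).trans hle
      rw [← Equiv.comp_swap_eq_update, ih, Equiv.swap_comm]
      exact le_comp_swap_iff (p := (c + 1, r)) (q := (c + 1, z)) hrz.le hzM hlt.le x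

lemma relabel_of_ne {x : Cell} (hx : x.1 ≠ c + 1) : relabel L T c x = L x :=
  if_neg fun h => hx h.1

lemma le_relabel_iff (hcol : ∀ t, (c, t) ∈ T → t ≤ L (c, t)) {x : Cell} (hx : x ∈ T) :
    x.2 ≤ relabel L T c x ↔ x.2 ≤ L x := by
  obtain ⟨a, r⟩ := x
  rcases (eq_or_ne a (c + 1)).symm with ha | rfl
  · rw [relabel_of_ne ha]
  unfold relabel
  rw [if_pos ⟨rfl, hx⟩]
  split
  · next t ht =>
    obtain ⟨hrt, hle, htT⟩ := labelPartner_spec ht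
    have hr : r ≤ L (c, t) := hrt.trans (hcol t htT)
    exact iff_of_true hr (hr.trans hle)
  · exact le_swapPass_iff hcol _ L _

lemma flagged_relabel_iff : Flagged T (relabel L T c) ↔ Flagged T L := by
  constructor
  · intro h x hx
    have hcol : ∀ t, (c, t) ∈ T → t ≤ L (c, t) := fun t ht =>
      relabel_of_ne (L := L) (T := T) (x := (c, t)) (Nat.succ_ne_self c).symm ▸ h _ ht
    exact (le_relabel_iff hcol hx).1 (h x hx)
  · intro h x hx
    exact (le_relabel_iff (fun t ht => h _ ht) hx).2 (h x hx)

end Relabel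

/-- `S` arises from `T` by moving some cells of column `c+1` left into empty positions of
column `c`. -/
structure ShiftsLeft (c : ℕ) (T S : Finset Cell) : Prop where
  mem_or : ∀ x ∈ S, x ∈ T ∨ x.1 = c ∧ (c + 1, x.2) ∈ T
  mem_of_ne : ∀ x ∈ T, x.1 ≠ c + 1 → x ∈ S
  moved_or : ∀ r, (c + 1, r) ∈ T → (c + 1, r) ∈ S ∨ (c, r) ∈ S ∧ (c, r) ∉ T

namespace ShiftsLeft

variable {c : ℕ} {T S U : Finset Cell}

lemma refl (c : ℕ) (T : Finset Cell) : ShiftsLeft c T T :=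
  ⟨fun _ hx => .inl hx, fun _ hx _ => hx, fun _ hr => .inl hr⟩

lemma trans (h₁ : ShiftsLeft c T S) (h₂ : ShiftsLeft c S U) : ShiftsLeft c T U where
  mem_or x hx := by
    rcases h₂.mem_or x hx with hS | ⟨hx₁, hS⟩
    · exact h₁.mem_or x hS
    · rcases h₁.mem_or _ hS with hT | ⟨hc, -⟩
      · exact .inr ⟨hx₁, hT⟩
      · simp at hc
  mem_of_ne x hx hx₁ := h₂.mem_of_ne x (h₁.mem_of_ne x hx hx₁) hx₁
  moved_or r hr := by
    rcases h₁.moved_or r hr with hS | ⟨hS, hT⟩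
    · rcases h₂.moved_or r hS with hU | ⟨hU, hS'⟩
      · exact .inl hU
      · exact .inr ⟨hU, fun hT => hS' (h₁.mem_of_ne _ hT (by simp))⟩
    · exact .inr ⟨h₂.mem_of_ne _ hS (by simp), hT⟩

lemma insert_erase {r : ℕ} (hr : (c + 1, r) ∈ T) (hr' : (c, r) ∉ T) :
    ShiftsLeft c T (insert (c, r) (T.erase (c + 1, r))) where
  mem_or x hx := by
    rcases Finset.mem_insert.1 hx with rfl | hx
    · exact .inr ⟨rfl, hr⟩
    · exact .inl (Finset.mem_of_mem_erase hx)
  mem_of_ne x hx hx₁ :=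
    Finset.mem_insert_of_mem (Finset.mem_erase.2 ⟨by rintro rfl; exact hx₁ rfl, hx⟩)
  moved_or s hs := by
    rcases eq_or_ne s r with rfl | hsr
    · exact .inr ⟨Finset.mem_insert_self _ _, hr'⟩
    · exact .inl (Finset.mem_insert_of_mem (Finset.mem_erase.2 ⟨by simp [hsr], hs⟩))

end ShiftsLeft

lemma shiftsLeft_rectify (c : ℕ) (T : Finset Cell) : ShiftsLeft c T (rectify c T) := by
  unfold rectify
  split
  · next h =>
    obtain ⟨hr, hr', -⟩ := Nat.sInf_mem h
    exact .insert_erase hr hr'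
  · exact .refl c T

lemma shiftsLeft_rectifyStar (c : ℕ) (T : Finset Cell) : ShiftsLeft c T (rectifyStar c T) := by
  unfold rectifyStar
  induction T.card with
  | zero => exact .refl c T
  | succ n ih =>
    rw [Function.iterate_succ_apply']
    exact ih.trans (shiftsLeft_rectify c _)

lemma Flagged.of_forall_exists {S T : Finset Cell} {L M : Labeling} (hT : Flagged T L)
    (h : ∀ x ∈ S, ∃ y ∈ T, x.2 ≤ y.2 ∧ L y ≤ M x) : Flagged S M := fun x hx => by
  obtain ⟨y, hy, hxy, hle⟩ := h x hx
  exact hxy.trans ((hT y hy).trans hle)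

section RectifyStar

variable {L : Labeling} {T : Finset Cell} {c : ℕ}

lemma rectifyStarLabel_of_mem {x : Cell} (hx : x ∈ T) :
    rectifyStarLabel L T c x = relabel L T c x :=
  if_neg fun h => h.2.1 hx

lemma rectifyStarLabel_of_moved {r : ℕ} (hT : (c, r) ∉ T) (hT' : (c + 1, r) ∈ T)
    (hS : (c, r) ∈ rectifyStar c T) :
    rectifyStarLabel L T c (c, r) = relabel L T c (c + 1, r) :=
  if_pos ⟨rfl, hT, hT', hS⟩

lemma exists_preimage_rectifyStar {x : Cell} (hx : x ∈ rectifyStar c T) :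
    ∃ y ∈ T, y.2 = x.2 ∧ relabel L T c y = rectifyStarLabel L T c x := by
  by_cases hxT : x ∈ T
  · exact ⟨x, hxT, rfl, (rectifyStarLabel_of_mem hxT).symm⟩
  obtain ⟨hx₁, hx'⟩ := ((shiftsLeft_rectifyStar c T).mem_or x hx).resolve_left hxT
  obtain ⟨a, r⟩ := x
  obtain rfl : a = c := hx₁
  exact ⟨_, hx', rfl, (rectifyStarLabel_of_moved hxT hx' hx).symm⟩

lemma exists_image_rectifyStar {y : Cell} (hy : y ∈ T) :
    ∃ x ∈ rectifyStar c T, x.2 = y.2 ∧ rectifyStarLabel L T c x = relabel L T c y := by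
  by_cases hyS : y ∈ rectifyStar c T
  · exact ⟨y, hyS, rfl, rectifyStarLabel_of_mem hy⟩
  have h := shiftsLeft_rectifyStar c T
  obtain ⟨a, r⟩ := y
  obtain rfl : a = c + 1 := by_contra fun ha => hyS (h.mem_of_ne _ hy ha)
  obtain ⟨hS, hT⟩ := (h.moved_or r hy).resolve_left hyS
  exact ⟨_, hS, rfl, rectifyStarLabel_of_moved hT hy hS⟩

lemma flagged_rectifyStar_iff :
    Flagged (rectifyStar c T) (rectifyStarLabel L T c) ↔ Flagged T (relabel L T c) := by
  constructor
  · refine fun h => h.of_forall_exists fun y hy => ?_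
    obtain ⟨x, hx, hxy, he⟩ := exists_image_rectifyStar hy
    exact ⟨x, hx, hxy.ge, he.le⟩
  · refine fun h => h.of_forall_exists fun x hx => ?_
    obtain ⟨y, hy, hxy, he⟩ := exists_preimage_rectifyStar hx
    exact ⟨y, hy, hxy.ge, he.le⟩

end RectifyStar

theorem flagged_iff_flagged_rectifyStar_general (T : Finset Cell) (L : Labeling) (c : ℕ) :
    Flagged T L ↔ Flagged (rectifyStar c T) (rectifyStarLabel L T c) :=
  (flagged_rectifyStar_iff.trans flagged_relabel_iff).symm

/-- **Lemma (flagged is preserved).** For a diagram `T` with labeling `L` and any column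
`c ≥ 1`, `L` is flagged iff the rectified labeling `R_c^*(L)` of `R_c^*(T)` is
flagged. -/
theorem flagged_iff_flagged_rectifyStar (T : Finset Cell) (hT : IsDiagram T)
    (L : Labeling) (c : ℕ) (hc : 1 ≤ c) :
    Flagged T L ↔ Flagged (rectifyStar c T) (rectifyStarLabel L T c) :=
  flagged_iff_flagged_rectifyStar_general T L c

end Kohnert
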